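/- Let H₂ be the irreflexive graph on vertex set {0,1,2,3} whose edges are exactly the pairs of distinct vertices other than {0,3} (i.e. K₄ minus one edge, with the edge relation symmetric), and let K₃ be the complete irreflexive graph on 3 vertices, both regarded as structures for the language with one binary relation symbol E. Then H₂ and K₃ satisfy exactly the same positive Horn sentences. -/

import Mathlib

open FirstOrder Language

/-- Positive Horn bounded formulas over a relational language: built from atomic
formulas `R(v₁,…,vₙ)` (relation symbols applied to variables, no equality) using
only conjunction, existential quantification, and universal quantification. -/
inductive IsPH (L : FirstOrder.Language) : ∀ {n : ℕ}, L.BoundedFormula Empty n → Prop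
  | rel {n l : ℕ} (R : L.Relations l) (v : Fin l → Fin n) :
      IsPH L (BoundedFormula.rel R fun i => Term.var (Sum.inr (v i)))
  | inf {n : ℕ} {φ ψ : L.BoundedFormula Empty n} :
      IsPH L φ → IsPH L ψ → IsPH L (φ ⊓ ψ)
  | ex {n : ℕ} {φ : L.BoundedFormula Empty (n + 1)} : IsPH L φ → IsPH L φ.ex
  | all {n : ℕ} {φ : L.BoundedFormula Empty (n + 1)} : IsPH L φ → IsPH L φ.all

/-- `φ` is true in the `L`-structure on `M` given by `S`. -/
def RealizeIn (L : FirstOrder.Language) (M : Type*) (S : L.Structure M)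
    (φ : L.Sentence) : Prop :=
  @FirstOrder.Language.Sentence.Realize L M S φ

/-- The relation symbols of the language with a single binary relation symbol `E`. -/
inductive EdgeSym : ℕ → Type
  | edge : EdgeSym 2

/-- The relational language with one binary relation symbol `E`. -/
def Lgr : FirstOrder.Language := ⟨fun _ => Empty, EdgeSym⟩

/-- The `Lgr`-structure on `M` in which `E` is interpreted as the relation `r`. -/
def relStruct {M : Type*} (r : M → M → Prop) : Lgr.Structure M where
  funMap := fun f _ => Empty.elim f
  RelMap := fun R x =>
    match R, x with
    | EdgeSym.edge, x => r (x 0) (x 1)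

/-!
Positive Horn sentences are preserved by surjective homomorphisms (atomic facts are carried
forward, and surjectivity lets a universal quantifier be pulled back) and by binary products
(all three connectives are computed coordinatewise). Identifying the vertices `0` and `3`
maps `H₂` homomorphically onto `K₃`; conversely `K₃ × K₃` maps homomorphically onto `H₂`.
-/

namespace FirstOrder.Language

open Structure

instance prodStructure {L : Language} {M N : Type*} [L.Structure M] [L.Structure N] :
    L.Structure (M × N) where
  funMap f x := (funMap f (Prod.fst ∘ x), funMap f (Prod.snd ∘ x))
  RelMap R x := RelMap R (Prod.fst ∘ x) ∧ RelMap R (Prod.snd ∘ x)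

end FirstOrder.Language

namespace IsPH

section

variable {L : Language} {M N : Type*} [L.Structure M] [L.Structure N]

theorem realize_comp_of_surjective (f : M →[L] N) (hf : Function.Surjective f) {n : ℕ}
    {φ : L.BoundedFormula Empty n} (hφ : IsPH L φ) {v : Empty → M} {xs : Fin n → M}
    (h : φ.Realize v xs) : φ.Realize (f ∘ v) (f ∘ xs) := by
  induction hφ with
  | rel R w => exact f.map_rel R (xs ∘ w) h
  | inf _ _ ih₁ ih₂ =>
    rw [BoundedFormula.realize_inf] at h ⊢
    exact ⟨ih₁ h.1, ih₂ h.2⟩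
  | ex _ ih =>
    obtain ⟨a, ha⟩ := BoundedFormula.realize_ex.1 h
    exact BoundedFormula.realize_ex.2 ⟨f a, Fin.comp_snoc f xs a ▸ ih ha⟩
  | all _ ih =>
    intro b
    obtain ⟨a, rfl⟩ := hf b
    exact Fin.comp_snoc f xs a ▸ ih (h a)

theorem realize_of_surjective (f : M →[L] N) (hf : Function.Surjective f) {φ : L.Sentence}
    (hφ : IsPH L φ) (h : M ⊨ φ) : N ⊨ φ := by
  have h' := realize_comp_of_surjective f hf hφ h
  rwa [Unique.eq_default (f ∘ default), Unique.eq_default (f ∘ default)] at h'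

theorem realize_prod {n : ℕ} {φ : L.BoundedFormula Empty n} (hφ : IsPH L φ)
    {v : Empty → M × N} {xs : Fin n → M × N}
    (h₁ : φ.Realize (Prod.fst ∘ v) (Prod.fst ∘ xs)) (h₂ : φ.Realize (Prod.snd ∘ v) (Prod.snd ∘ xs)) :
    φ.Realize v xs := by
  induction hφ with
  | rel R w => exact ⟨h₁, h₂⟩
  | inf _ _ ih₁ ih₂ =>
    rw [BoundedFormula.realize_inf] at h₁ h₂ ⊢
    exact ⟨ih₁ h₁.1 h₂.1, ih₂ h₁.2 h₂.2⟩
  | ex _ ih =>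
    obtain ⟨a, ha⟩ := BoundedFormula.realize_ex.1 h₁
    obtain ⟨b, hb⟩ := BoundedFormula.realize_ex.1 h₂
    refine BoundedFormula.realize_ex.2
      ⟨(a, b), ih (Fin.comp_snoc _ xs (a, b) ▸ ha) (Fin.comp_snoc _ xs (a, b) ▸ hb)⟩
  | all _ ih =>
    rintro ⟨a, b⟩
    exact ih (Fin.comp_snoc _ xs (a, b) ▸ h₁ a) (Fin.comp_snoc _ xs (a, b) ▸ h₂ b)

theorem realize_sentence_prod {φ : L.Sentence} (hφ : IsPH L φ) (h₁ : M ⊨ φ) (h₂ : N ⊨ φ) :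
    (M × N) ⊨ φ := by
  refine realize_prod hφ ?_ ?_
  · rwa [Unique.eq_default (Prod.fst ∘ default), Unique.eq_default (Prod.fst ∘ default)]
  · rwa [Unique.eq_default (Prod.snd ∘ default), Unique.eq_default (Prod.snd ∘ default)]

end

variable {M N : Type*} {r : M → M → Prop} {s : N → N → Prop} {φ : Lgr.Sentence}

theorem realizeIn_relStruct_of_surjective (hφ : IsPH Lgr φ) (f : M → N)
    (hf : Function.Surjective f) (hrs : ∀ a b, r a b → s (f a) (f b))
    (h : RealizeIn Lgr M (relStruct r) φ) : RealizeIn Lgr N (relStruct s) φ :=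
  letI := relStruct r
  letI := relStruct s
  hφ.realize_of_surjective
    { toFun := f
      map_fun' := fun g => (g : Empty).elim
      map_rel' := fun R _ hx => by cases R; exact hrs _ _ hx } hf h

theorem prodStructure_relStruct :
    @prodStructure Lgr M N (relStruct r) (relStruct s) =
      relStruct fun p q => r p.1 q.1 ∧ s p.2 q.2 := by
  unfold prodStructure relStruct
  congr
  · funext _ f
    exact (f : Empty).elim
  · funext _ R
    cases R
    rfl

theorem realizeIn_relStruct_prod (hφ : IsPH Lgr φ) (h₁ : RealizeIn Lgr M (relStruct r) φ)
    (h₂ : RealizeIn Lgr N (relStruct s) φ) :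
    RealizeIn Lgr (M × N) (relStruct fun p q => r p.1 q.1 ∧ s p.2 q.2) φ := by
  rw [← prodStructure_relStruct]
  exact @realize_sentence_prod _ _ _ (relStruct r) (relStruct s) _ hφ h₁ h₂

end IsPH

/-- The graph `H₂` (`K₄` minus the edge `{0,3}`, irreflexive and symmetric) and the
complete irreflexive graph `K₃` satisfy exactly the same positive Horn sentences. -/
theorem stmt19 (φ : Lgr.Sentence) (hφ : IsPH Lgr φ) :
    RealizeIn Lgr (Fin 4)
      (relStruct fun a b : Fin 4 => a ≠ b ∧ ¬(a = 0 ∧ b = 3) ∧ ¬(a = 3 ∧ b = 0)) φ ↔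
    RealizeIn Lgr (Fin 3) (relStruct fun a b : Fin 3 => a ≠ b) φ := by
  refine ⟨hφ.realizeIn_relStruct_of_surjective ![0, 1, 2, 0] (by decide) (by decide),
    fun h => ?_⟩
  -- A pair lands in `{0, 3}` only if its first coordinate is `0`, and adjacent pairs differ
  -- there, so the missing edge `{0, 3}` is never needed.
  exact hφ.realizeIn_relStruct_of_surjective
    (fun p : Fin 3 × Fin 3 =>
      if p.1 = 1 then 1 else if p.1 = 2 then 2 else if p.2 = 1 then 3 else 0)
    (by decide) (by decide) (hφ.realizeIn_relStruct_prod h h)
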